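/- arXiv:2208.06548 — 3 statements merged into one kernel-verified Lean document; each statement's English description precedes it below -/
import Mathlib

section
/- (Stability step in Theorem 2.1) Let v : ℕ → ℝ be a sequence and N ≥ 1 an integer such that δ_n^α v ≤ 0 for every n with 1 ≤ n ≤ N. Then v(N) ≤ v(0). -/
open Filter Finset

/-- L1-scheme coefficient `b_j^{(β)} = (j+1)^β - j^β` (real powers). -/
noncomputable def bcoef (β : ℝ) (j : ℕ) : ℝ := ((j : ℝ) + 1) ^ β - (j : ℝ) ^ β

/-- L1 discretization of the Caputo derivative of order `α` with time step `Δt`,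
evaluated at time level `n ≥ 1`:
`δ_n^α f = ((Δt)^{-α}/Γ(2-α)) (f n - b_{n-1} f 0 - Σ_{j=1}^{n-1} (b_{j-1}-b_j) f (n-j))`. -/
noncomputable def L1 (α Δt : ℝ) (f : ℕ → ℝ) (n : ℕ) : ℝ :=
  Δt ^ (-α) / Real.Gamma (2 - α) *
    (f n - bcoef (1 - α) (n - 1) * f 0 -
      ∑ j ∈ Finset.Icc 1 (n - 1), (bcoef (1 - α) (j - 1) - bcoef (1 - α) j) * f (n - j))

lemma bcoef_anti {β : ℝ} (hβ0 : 0 < β) (hβ1 : β < 1) (j : ℕ) :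
    bcoef β (j + 1) ≤ bcoef β j := by
  have hcc := (Real.strictConcaveOn_rpow hβ0 hβ1).concaveOn
  have h := hcc.2 (Set.mem_Ici.mpr (by positivity : (0:ℝ) ≤ (j : ℝ)))
    (Set.mem_Ici.mpr (by positivity : (0:ℝ) ≤ (j : ℝ) + 2))
    (by norm_num : (0:ℝ) ≤ 1/2) (by norm_num : (0:ℝ) ≤ 1/2)
    (by norm_num : (1/2 : ℝ) + 1/2 = 1)
  have hmid : (1/2 : ℝ) • (j : ℝ) + (1/2 : ℝ) • ((j : ℝ) + 2) = (j : ℝ) + 1 := by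
    simp [smul_eq_mul]; ring
  rw [hmid] at h
  simp only [smul_eq_mul] at h
  have : ((j : ℕ) + 1 : ℕ) = (j + 1 : ℕ) := rfl
  simp only [bcoef, Nat.cast_add, Nat.cast_one]
  have h2 : ((j : ℝ) + 1) + 1 = (j : ℝ) + 2 := by ring
  rw [h2]
  linarith

lemma bcoef_telescope {β : ℝ} : ∀ m : ℕ,
    ∑ j ∈ Finset.Icc 1 m, (bcoef β (j - 1) - bcoef β j) = bcoef β 0 - bcoef β m := by
  intro m
  induction m with
  | zero => simp
  | succ m ih =>
    rw [Finset.sum_Icc_succ_top (Nat.le_add_left 1 m), ih]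
    simp only [Nat.add_sub_cancel]
    ring

/-- stability step in Theorem 2.1: if `δ_n^α v ≤ 0` for `1 ≤ n ≤ N`,
then `v N ≤ v 0`. -/
theorem stmt_5 (α Δt : ℝ) (hα0 : 0 < α) (hα1 : α < 1) (hΔt : 0 < Δt)
    (v : ℕ → ℝ) (N : ℕ) (hN : 1 ≤ N)
    (hder : ∀ n : ℕ, 1 ≤ n → n ≤ N → L1 α Δt v n ≤ 0) :
    v N ≤ v 0 := by
  set β : ℝ := 1 - α with hβ
  have hβ0 : 0 < β := by simp [hβ]; linarith
  have hβ1 : β < 1 := by simp [hβ]; linarith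
  have hb0 : bcoef β 0 = 1 := by
    simp [bcoef, Real.zero_rpow (ne_of_gt hβ0)]
  have hanti : ∀ j : ℕ, 1 ≤ j → 0 ≤ bcoef β (j - 1) - bcoef β j := by
    intro j hj
    obtain ⟨i, rfl⟩ := Nat.exists_eq_add_of_le hj
    have hb := bcoef_anti hβ0 hβ1 i
    have e1 : 1 + i - 1 = i := by omega
    have e2 : 1 + i = i + 1 := by omega
    rw [e1, e2]
    linarith
  suffices H : ∀ n, n ≤ N → v n ≤ v 0 from H N le_rfl
  intro n
  induction n using Nat.strong_induction_on with
  | _ n ih =>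
    intro hnN
    rcases Nat.eq_zero_or_pos n with h0 | h1
    · simp [h0]
    · have hL := hder n h1 hnN
      have hc : 0 < Δt ^ (-α) / Real.Gamma (2 - α) :=
        div_pos (Real.rpow_pos_of_pos hΔt _) (Real.Gamma_pos_of_pos (by linarith))
      rw [L1] at hL
      have hX : v n - bcoef β (n - 1) * v 0 -
          ∑ j ∈ Finset.Icc 1 (n - 1), (bcoef β (j - 1) - bcoef β j) * v (n - j) ≤ 0 := by
        by_contra h
        push_neg at h
        nlinarith
      have hsumle : ∑ j ∈ Finset.Icc 1 (n - 1), (bcoef β (j - 1) - bcoef β j) * v (n - j) ≤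
          ∑ j ∈ Finset.Icc 1 (n - 1), (bcoef β (j - 1) - bcoef β j) * v 0 := by
        apply Finset.sum_le_sum
        intro j hj
        rw [Finset.mem_Icc] at hj
        have hjn : n - j < n := Nat.sub_lt h1 hj.1
        exact mul_le_mul_of_nonneg_left
          (ih (n - j) hjn (le_trans (Nat.sub_le n j) hnN)) (hanti j hj.1)
      rw [← Finset.sum_mul, bcoef_telescope (n - 1), hb0] at hsumle
      nlinarith [hsumle, hX]
end

section
/- (Theorem 2.1, discrete fractional Lyapunov method) Let l : ℝ → ℝ satisfy l(0) = 0, and let x : ℕ → ℝ satisfy δ_n^α x = l(x(n)) for all n ≥ 1. Suppose V, W : ℝ → ℝ satisfy V(0) = W(0) = 0 and there are class-K functions φ₁, φ₂, ψ₁, ψ₂ : [0,∞) → [0,∞) with φ₁(|y|) ≤ V(y) ≤ φ₂(|y|) and ψ₁(|y|) ≤ W(y) ≤ ψ₂(|y|) for all y ∈ ℝ, and suppose δ_n^α (V∘x) ≤ −W(x(n)) for every n ≥ 1. Then x(n) → 0 as n → ∞. -/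
/-!
Write `δ_n^α v = c (v n - H_n v)` with `c > 0`, where the memory term `H_n v` is a convex
combination of `v 0, …, v (n - 1)` whose total weight on any fixed initial segment
`v 0, …, v (N - 1)` is `bcoef (1 - α) (n - N) → 0`. For `v = V ∘ x` the Lyapunov inequality
reads `v n + W (x n) / c ≤ H_n v`; hence `v ≤ v 0`, and eventually
`v n + W (x n) / c ≤ limsup v + ε`.
At the (infinitely many) times where `v n` is within `ε` of `limsup v`, the dissipation `W (x n)`
is therefore small, hence so are `|x n|` and `v n ≤ φ₂ |x n|`. This forces `limsup v = 0`, and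
`φ₁ |x n| ≤ v n` then gives `x n → 0`.
-/

open Filter Finset

open Topology

section bcoef

variable {β : ℝ}

lemma bcoef_zero (hβ : 0 < β) : bcoef β 0 = 1 := by
  simp [bcoef, Real.zero_rpow hβ.ne']

lemma bcoef_nonneg (hβ : 0 ≤ β) (j : ℕ) : 0 ≤ bcoef β j :=
  sub_nonneg.2 (Real.rpow_le_rpow (Nat.cast_nonneg j) (by linarith) hβ)

lemma bcoef_antitone (hβ0 : 0 ≤ β) (hβ1 : β ≤ 1) : Antitone (bcoef β) := by
  refine antitone_nat_of_succ_le fun j => ?_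
  have h := (Real.concaveOn_rpow hβ0 hβ1).slope_anti_adjacent (x := j) (y := j + 1) (z := j + 2)
    (Set.mem_Ici.2 (Nat.cast_nonneg j)) (Set.mem_Ici.2 (by positivity : (0 : ℝ) ≤ j + 2))
    (by linarith) (by linarith)
  norm_num at h
  simp only [bcoef, Nat.cast_succ, add_assoc, one_add_one_eq_two]
  linarith

lemma sum_range_bcoef (β : ℝ) (n : ℕ) :
    ∑ j ∈ range n, bcoef β j = (n : ℝ) ^ β - 0 ^ β := by
  simpa [bcoef] using sum_range_sub (fun j : ℕ => (j : ℝ) ^ β) n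

lemma bcoef_le_rpow (hβ0 : 0 ≤ β) (hβ1 : β ≤ 1) (n : ℕ) :
    bcoef β n ≤ ((n : ℝ) + 1) ^ (β - 1) := by
  have hpos : (0 : ℝ) < n + 1 := by positivity
  have hmul : ((n : ℝ) + 1) * bcoef β n ≤ ((n : ℝ) + 1) ^ β := by
    calc ((n : ℝ) + 1) * bcoef β n = (range (n + 1)).card • bcoef β n := by simp
      _ ≤ ∑ j ∈ range (n + 1), bcoef β j :=
        card_nsmul_le_sum _ _ _ fun j hj =>
          bcoef_antitone hβ0 hβ1 (Nat.lt_succ_iff.1 (mem_range.1 hj))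
      _ ≤ ((n : ℝ) + 1) ^ β := by
        rw [sum_range_bcoef]
        push_cast
        linarith [Real.rpow_nonneg (le_refl (0 : ℝ)) β]
  rw [Real.rpow_sub_one hpos.ne', le_div_iff₀ hpos]
  linarith

lemma tendsto_bcoef_zero (hβ0 : 0 ≤ β) (hβ1 : β < 1) :
    Tendsto (bcoef β) atTop (𝓝 0) := by
  refine squeeze_zero (bcoef_nonneg hβ0) (bcoef_le_rpow hβ0 hβ1.le) ?_
  have hshift : Tendsto (fun n : ℕ => (n : ℝ) + 1) atTop atTop :=
    tendsto_natCast_atTop_atTop.atTop_add tendsto_const_nhds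
  have h := (tendsto_rpow_neg_atTop (by linarith : 0 < 1 - β)).comp hshift
  simpa [Function.comp_def, neg_sub] using h

end bcoef

lemma sum_Ioc_pred_sub {M : Type*} [AddCommGroup M] (f : ℕ → M) {a m : ℕ} (h : a ≤ m) :
    ∑ j ∈ Ioc a m, (f (j - 1) - f j) = f a - f m := by
  induction m, h using Nat.le_induction with
  | base => simp
  | succ m hm ih =>
    rw [sum_Ioc_succ_top hm, ih, Nat.add_sub_cancel]
    abel

/-- The memory term of the L1 scheme, a convex combination of `f 0, …, f (n - 1)`. -/
noncomputable def l1History (β : ℝ) (f : ℕ → ℝ) (n : ℕ) : ℝ :=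
  bcoef β (n - 1) * f 0 + ∑ j ∈ Icc 1 (n - 1), (bcoef β (j - 1) - bcoef β j) * f (n - j)

lemma L1_eq_mul_sub_l1History (α Δt : ℝ) (f : ℕ → ℝ) (n : ℕ) :
    L1 α Δt f n = Δt ^ (-α) / Real.Gamma (2 - α) * (f n - l1History (1 - α) f n) := by
  rw [L1, l1History, sub_add_eq_sub_sub]

section l1History

variable {β : ℝ} {f : ℕ → ℝ}

lemma l1History_le (hβ0 : 0 < β) (hβ1 : β ≤ 1) {n N : ℕ} {B M : ℝ}
    (hN : 1 ≤ N) (hNn : N ≤ n)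
    (hB : ∀ k < n, f k ≤ B) (hM : ∀ k, N ≤ k → k < n → f k ≤ M) :
    l1History β f n ≤ M + bcoef β (n - N) * (B - M) := by
  have hanti := bcoef_antitone hβ0.le hβ1
  have hw : ∀ j, 0 ≤ bcoef β (j - 1) - bcoef β j :=
    fun j => sub_nonneg.2 (hanti (Nat.sub_le j 1))
  have hrecent : ∑ j ∈ Ioc 0 (n - N), (bcoef β (j - 1) - bcoef β j) * f (n - j) ≤
      (1 - bcoef β (n - N)) * M := by
    calc _ ≤ ∑ j ∈ Ioc 0 (n - N), (bcoef β (j - 1) - bcoef β j) * M := by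
          refine sum_le_sum fun j hj => mul_le_mul_of_nonneg_left ?_ (hw j)
          rw [mem_Ioc] at hj
          exact hM _ (by omega) (by omega)
      _ = (1 - bcoef β (n - N)) * M := by
          rw [← sum_mul, sum_Ioc_pred_sub _ (Nat.zero_le _), bcoef_zero hβ0]
  have hold : ∑ j ∈ Ioc (n - N) (n - 1), (bcoef β (j - 1) - bcoef β j) * f (n - j) ≤
      (bcoef β (n - N) - bcoef β (n - 1)) * B := by
    calc _ ≤ ∑ j ∈ Ioc (n - N) (n - 1), (bcoef β (j - 1) - bcoef β j) * B := by
          refine sum_le_sum fun j hj => mul_le_mul_of_nonneg_left ?_ (hw j)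
          rw [mem_Ioc] at hj
          exact hB _ (by omega)
      _ = (bcoef β (n - N) - bcoef β (n - 1)) * B := by
          rw [← sum_mul, sum_Ioc_pred_sub _ (by omega)]
  have hfirst : bcoef β (n - 1) * f 0 ≤ bcoef β (n - 1) * B :=
    mul_le_mul_of_nonneg_left (hB 0 (by omega)) (bcoef_nonneg hβ0.le _)
  rw [l1History, show Icc 1 (n - 1) = Ioc 0 (n - 1) from Icc_add_one_left_eq_Ioc 0 _,
    ← sum_Ioc_consecutive _ (Nat.zero_le _) (by omega : n - N ≤ n - 1)]
  linarith

lemma l1History_le_of_forall_lt_le (hβ0 : 0 < β) (hβ1 : β ≤ 1) {n : ℕ} {B : ℝ}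
    (hn : 1 ≤ n) (hB : ∀ k < n, f k ≤ B) : l1History β f n ≤ B := by
  simpa [bcoef_zero hβ0] using l1History_le hβ0 hβ1 hn le_rfl hB fun k _ hk => hB k hk

end l1History

section subsolution

variable {β : ℝ} {v e : ℕ → ℝ}

lemma le_apply_zero_of_add_le_l1History (hβ0 : 0 < β) (hβ1 : β ≤ 1)
    (hsub : ∀ n, 1 ≤ n → v n + e n ≤ l1History β v n) (he : ∀ n, 0 ≤ e n) (n : ℕ) :
    v n ≤ v 0 := by
  induction n using Nat.strong_induction_on with
  | _ n ih =>
    rcases Nat.eq_zero_or_pos n with rfl | hn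
    · rfl
    · linarith [he n, hsub n hn, l1History_le_of_forall_lt_le hβ0 hβ1 hn ih]

lemma eventually_add_le_of_add_le_l1History (hβ0 : 0 < β) (hβ1 : β < 1)
    (hsub : ∀ n, 1 ≤ n → v n + e n ≤ l1History β v n) (he : ∀ n, 0 ≤ e n) {M ε : ℝ}
    (hM : ∀ᶠ n in atTop, v n ≤ M) (hε : 0 < ε) :
    ∀ᶠ n in atTop, v n + e n ≤ M + ε := by
  obtain ⟨N₀, hN₀⟩ := eventually_atTop.1 hM
  set N := max N₀ 1
  have hsmall : ∀ᶠ n in atTop, bcoef β (n - N) * (v 0 - M) < ε := by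
    have h := (tendsto_bcoef_zero hβ0.le hβ1).mul_const (v 0 - M)
    rw [zero_mul] at h
    exact (tendsto_sub_atTop_nat N).eventually (h.eventually (gt_mem_nhds hε))
  filter_upwards [hsmall, eventually_ge_atTop N] with n hn hNn
  calc v n + e n ≤ l1History β v n := hsub n (le_trans (le_max_right _ _) hNn)
    _ ≤ M + bcoef β (n - N) * (v 0 - M) :=
        l1History_le hβ0 hβ1.le (le_max_right _ _) hNn
          (fun k _ => le_apply_zero_of_add_le_l1History hβ0 hβ1.le hsub he k)
          fun k hk _ => hN₀ k (le_trans (le_max_left _ _) hk)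
    _ ≤ M + ε := by linarith

theorem tendsto_zero_of_add_le_l1History (hβ0 : 0 < β) (hβ1 : β < 1)
    (hsub : ∀ n, 1 ≤ n → v n + e n ≤ l1History β v n) (he : ∀ n, 0 ≤ e n)
    (hv : ∀ n, 0 ≤ v n) (hev : ∀ a > 0, ∃ b > 0, ∀ n, e n < b → v n ≤ a) :
    Tendsto v atTop (𝓝 0) := by
  have hbdd : IsBoundedUnder (· ≤ ·) atTop v :=
    isBoundedUnder_of ⟨v 0, le_apply_zero_of_add_le_l1History hβ0 hβ1.le hsub he⟩
  set L := limsup v atTop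
  have hL : L ≤ 0 := by
    by_contra! hL
    obtain ⟨b, hb, hvb⟩ := hev (L / 2) (half_pos hL)
    set ε := min (L / 2) (b / 2)
    have hε : 0 < ε := lt_min (half_pos hL) (half_pos hb)
    have hupper : ∀ᶠ n in atTop, v n + e n ≤ L + ε / 2 + ε / 2 :=
      eventually_add_le_of_add_le_l1History hβ0 hβ1 hsub he
        ((eventually_lt_of_limsup_lt (lt_add_of_pos_right L (half_pos hε)) hbdd).mono
          fun _ => le_of_lt) (half_pos hε)
    have hlower : ∃ᶠ n in atTop, L - ε < v n :=
      frequently_lt_of_lt_limsup (isCoboundedUnder_le_of_le atTop hv) (by linarith)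
    obtain ⟨n, hn_lower, hn_upper⟩ := (hlower.and_eventually hupper).exists
    have := hvb n (by linarith [min_le_right (L / 2) (b / 2)])
    linarith [min_le_left (L / 2) (b / 2)]
  exact tendsto_order.2 ⟨fun a ha => Eventually.of_forall fun n => ha.trans_le (hv n),
    fun a ha => eventually_lt_of_limsup_lt (hL.trans_lt ha) hbdd⟩

end subsolution

lemma exists_pos_apply_lt {φ : ℝ → ℝ} (hφ : ContinuousWithinAt φ (Set.Ici 0) 0)
    (hφ0 : φ 0 = 0) {a : ℝ} (ha : 0 < a) : ∃ δ > 0, φ δ < a := by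
  have h := (hφ.mono Set.Ioi_subset_Ici_self).tendsto
  rw [hφ0] at h
  exact (eventually_mem_nhdsWithin.and (h.eventually (gt_mem_nhds ha))).exists

lemma tendsto_zero_of_apply_abs_le {ι : Type*} {l : Filter ι} {φ : ℝ → ℝ}
    (hφ : StrictMonoOn φ (Set.Ici 0)) (hφ0 : φ 0 = 0) {x v : ι → ℝ}
    (hle : ∀ i, φ |x i| ≤ v i) (hv : Tendsto v l (𝓝 0)) : Tendsto x l (𝓝 0) := by
  rw [Metric.tendsto_nhds]
  intro ε hε
  have hφε : 0 < φ ε := hφ0 ▸ hφ Set.self_mem_Ici hε.le hε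
  filter_upwards [hv.eventually (gt_mem_nhds hφε)] with i hi
  rw [Real.dist_0_eq_abs]
  exact (hφ.lt_iff_lt (Set.mem_Ici.2 (abs_nonneg _)) hε.le).1 ((hle i).trans_lt hi)

theorem stmt_6_general (α Δt : ℝ) (hα0 : 0 < α) (hα1 : α < 1) (hΔt : 0 < Δt)
    (x : ℕ → ℝ) (V W : ℝ → ℝ) (φ₁ φ₂ ψ₁ ψ₂ : ℝ → ℝ)
    (hφ₁ : ContinuousOn φ₁ (Set.Ici 0) ∧ StrictMonoOn φ₁ (Set.Ici 0) ∧ φ₁ 0 = 0 ∧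
      Set.MapsTo φ₁ (Set.Ici 0) (Set.Ici 0))
    (hφ₂ : ContinuousOn φ₂ (Set.Ici 0) ∧ StrictMonoOn φ₂ (Set.Ici 0) ∧ φ₂ 0 = 0 ∧
      Set.MapsTo φ₂ (Set.Ici 0) (Set.Ici 0))
    (hψ₁ : ContinuousOn ψ₁ (Set.Ici 0) ∧ StrictMonoOn ψ₁ (Set.Ici 0) ∧ ψ₁ 0 = 0 ∧
      Set.MapsTo ψ₁ (Set.Ici 0) (Set.Ici 0))
    (hVb : ∀ y : ℝ, φ₁ |y| ≤ V y ∧ V y ≤ φ₂ |y|)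
    (hWb : ∀ y : ℝ, ψ₁ |y| ≤ W y ∧ W y ≤ ψ₂ |y|)
    (hLyap : ∀ n : ℕ, 1 ≤ n → L1 α Δt (fun j => V (x j)) n ≤ -W (x n)) :
    Filter.Tendsto x Filter.atTop (nhds 0) := by
  set c := Δt ^ (-α) / Real.Gamma (2 - α)
  have hc : 0 < c := div_pos (Real.rpow_pos_of_pos hΔt _) (Real.Gamma_pos_of_pos (by linarith))
  have hV : ∀ y, 0 ≤ V y := fun y => (hφ₁.2.2.2 (abs_nonneg y)).trans (hVb y).1
  have hW : ∀ y, 0 ≤ W y := fun y => (hψ₁.2.2.2 (abs_nonneg y)).trans (hWb y).1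
  have hsub : ∀ n, 1 ≤ n →
      V (x n) + W (x n) / c ≤ l1History (1 - α) (fun j => V (x j)) n := by
    intro n hn
    have h := hLyap n hn
    rw [L1_eq_mul_sub_l1History, ← le_div_iff₀' hc, neg_div] at h
    linarith
  have hsmall : ∀ a > 0, ∃ b > 0, ∀ n, W (x n) / c < b → V (x n) ≤ a := by
    intro a ha
    obtain ⟨δ, hδ, hφ₂δ⟩ :=
      exists_pos_apply_lt (hφ₂.1 0 Set.self_mem_Ici) hφ₂.2.2.1 ha
    have hψ₁δ : 0 < ψ₁ δ := hψ₁.2.2.1 ▸ hψ₁.2.1 Set.self_mem_Ici hδ.le hδ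
    refine ⟨ψ₁ δ / c, div_pos hψ₁δ hc, fun n hn => ?_⟩
    have hxδ : |x n| < δ :=
      (hψ₁.2.1.lt_iff_lt (Set.mem_Ici.2 (abs_nonneg _)) hδ.le).1
        ((hWb (x n)).1.trans_lt ((div_lt_div_iff_of_pos_right hc).1 hn))
    exact (hVb (x n)).2.trans
      ((hφ₂.2.1.monotoneOn (Set.mem_Ici.2 (abs_nonneg _)) hδ.le hxδ.le).trans hφ₂δ.le)
  exact tendsto_zero_of_apply_abs_le hφ₁.2.1 hφ₁.2.2.1 (fun n => (hVb (x n)).1)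
    (tendsto_zero_of_add_le_l1History (by linarith) (by linarith) hsub
      (fun n => div_nonneg (hW _) hc.le) (fun n => hV _) hsmall)

/-- Theorem 2.1, discrete fractional Lyapunov method. A class-K function is
continuous, strictly increasing on `[0,∞)`, vanishes at `0` and maps `[0,∞)` to `[0,∞)`. -/
theorem stmt_6 (α Δt : ℝ) (hα0 : 0 < α) (hα1 : α < 1) (hΔt : 0 < Δt)
    (l : ℝ → ℝ) (hl : l 0 = 0)
    (x : ℕ → ℝ) (hx : ∀ n : ℕ, 1 ≤ n → L1 α Δt x n = l (x n))
    (V W : ℝ → ℝ) (hV0 : V 0 = 0) (hW0 : W 0 = 0)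
    (φ₁ φ₂ ψ₁ ψ₂ : ℝ → ℝ)
    (hφ₁ : ContinuousOn φ₁ (Set.Ici 0) ∧ StrictMonoOn φ₁ (Set.Ici 0) ∧ φ₁ 0 = 0 ∧
      Set.MapsTo φ₁ (Set.Ici 0) (Set.Ici 0))
    (hφ₂ : ContinuousOn φ₂ (Set.Ici 0) ∧ StrictMonoOn φ₂ (Set.Ici 0) ∧ φ₂ 0 = 0 ∧
      Set.MapsTo φ₂ (Set.Ici 0) (Set.Ici 0))
    (hψ₁ : ContinuousOn ψ₁ (Set.Ici 0) ∧ StrictMonoOn ψ₁ (Set.Ici 0) ∧ ψ₁ 0 = 0 ∧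
      Set.MapsTo ψ₁ (Set.Ici 0) (Set.Ici 0))
    (hψ₂ : ContinuousOn ψ₂ (Set.Ici 0) ∧ StrictMonoOn ψ₂ (Set.Ici 0) ∧ ψ₂ 0 = 0 ∧
      Set.MapsTo ψ₂ (Set.Ici 0) (Set.Ici 0))
    (hVb : ∀ y : ℝ, φ₁ |y| ≤ V y ∧ V y ≤ φ₂ |y|)
    (hWb : ∀ y : ℝ, ψ₁ |y| ≤ W y ∧ W y ≤ ψ₂ |y|)
    (hLyap : ∀ n : ℕ, 1 ≤ n → L1 α Δt (fun j => V (x j)) n ≤ -W (x n)) :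
    Filter.Tendsto x Filter.atTop (nhds 0) :=
  stmt_6_general α Δt hα0 hα1 hΔt x V W φ₁ φ₂ ψ₁ ψ₂ hφ₁ hφ₂ hψ₁ hVb hWb hLyap
end

section
/- (Theorem 3.1, positivity) Assume f : ℝ → ℝ is continuous with f(0) = 0 and f(I) ≥ 0 for I ≥ 0, and let (S, I, R) be a solution of the discrete system (6) with positive initial data. Then S_n^k ≥ 0, I_n^k ≥ 0 and R_n^k ≥ 0 for all 0 ≤ n ≤ M and all k ≥ 0. -/
open Filter Finset

lemma bcoef_pos {β : ℝ} (hb : 0 < β) (j : ℕ) : 0 < bcoef β j :=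
  sub_pos.mpr (Real.rpow_lt_rpow (Nat.cast_nonneg j) (lt_add_one _) hb)

lemma bcoef_anti_s11 {β : ℝ} (hb0 : 0 ≤ β) (hb1 : β ≤ 1) {j : ℕ} (hj : 1 ≤ j) :
    bcoef β j ≤ bcoef β (j - 1) := by
  have hj1 : (1 : ℝ) ≤ (j : ℝ) := by exact_mod_cast hj
  have hcast : ((j - 1 : ℕ) : ℝ) = (j : ℝ) - 1 := by
    push_cast [hj]; ring
  have hconc := (Real.concaveOn_rpow hb0 hb1).2
    (show ((j:ℝ) - 1) ∈ Set.Ici (0:ℝ) from Set.mem_Ici.mpr (by linarith))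
    (show ((j:ℝ) + 1) ∈ Set.Ici (0:ℝ) from Set.mem_Ici.mpr (by linarith))
    (show (0:ℝ) ≤ 1/2 by norm_num) (show (0:ℝ) ≤ 1/2 by norm_num)
    (show (1/2 : ℝ) + 1/2 = 1 by norm_num)
  simp only [smul_eq_mul] at hconc
  have hmid : (1/2 : ℝ) * ((j:ℝ) - 1) + 1/2 * ((j:ℝ) + 1) = (j:ℝ) := by ring
  rw [hmid] at hconc
  unfold bcoef
  rw [hcast]
  have : ((j:ℝ) - 1) + 1 = (j:ℝ) := by ring
  rw [this]
  linarith

lemma minprinciple (M : ℕ) (u A P c : ℤ → ℝ) (rr g : ℝ) (hrr : 0 < rr) (hg : 0 < g)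
    (hbc0 : u (-1) = u 0) (hbcM : u ((M:ℤ) + 1) = u (M:ℤ))
    (hA : ∀ n : ℤ, 0 ≤ n → n ≤ (M:ℤ) → 0 ≤ A n)
    (hP : ∀ n : ℤ, 0 ≤ n → n ≤ (M:ℤ) → 0 ≤ P n)
    (hc : ∀ n : ℤ, 0 ≤ n → n ≤ (M:ℤ) → 0 ≤ c n)
    (heq : ∀ n : ℤ, 0 ≤ n → n ≤ (M:ℤ) →
      u n - rr * (u (n-1) - 2 * u n + u (n+1)) = A n + g * (P n - c n * u n)) :
    ∀ n : ℤ, 0 ≤ n → n ≤ (M:ℤ) → 0 ≤ u n := by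
  have hmem : (0:ℤ) ∈ Finset.Icc (0:ℤ) (M:ℤ) := by simp
  obtain ⟨m, hmmem, hmin⟩ := (Finset.Icc (0:ℤ) (M:ℤ)).exists_min_image u ⟨0, hmem⟩
  rw [Finset.mem_Icc] at hmmem
  obtain ⟨hm0, hmM⟩ := hmmem
  have hmin' : ∀ n : ℤ, 0 ≤ n → n ≤ (M:ℤ) → u m ≤ u n := fun n h1 h2 =>
    hmin n (Finset.mem_Icc.mpr ⟨h1, h2⟩)
  have hL : u m ≤ u (m - 1) := by
    rcases eq_or_lt_of_le hm0 with h | h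
    · rw [← h]; norm_num [hbc0]
    · exact hmin' _ (by omega) (by omega)
  have hRt : u m ≤ u (m + 1) := by
    rcases eq_or_lt_of_le hmM with h | h
    · rw [h, hbcM]
    · exact hmin' _ (by omega) (by omega)
  have he := heq m hm0 hmM
  have h1 : (1 + g * c m) * u m = A m + g * P m + rr * (u (m-1) - 2*u m + u (m+1)) := by
    linear_combination he
  have hΔ : 0 ≤ u (m-1) - 2*u m + u (m+1) := by linarith
  have hgc : 0 < 1 + g * c m := by
    have := mul_nonneg hg.le (hc m hm0 hmM); linarith
  have hum : 0 ≤ u m := by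
    have hrhs : 0 ≤ (1 + g * c m) * u m := by
      rw [h1]
      have := mul_nonneg hrr.le hΔ
      have := mul_nonneg hg.le (hP m hm0 hmM)
      have := hA m hm0 hmM
      linarith
    exact nonneg_of_mul_nonneg_right hrhs hgc
  exact fun n h1 h2 => le_trans hum (hmin' n h1 h2)

/-- Theorem 3.1, positivity of solutions of the discrete system (6). -/
theorem stmt_11
    (f : ℝ → ℝ) (hfc : Continuous f) (hf0 : f 0 = 0) (hfnn : ∀ y : ℝ, 0 ≤ y → 0 ≤ f y)
    (M : ℕ) (hM : 1 ≤ M)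
    (α Δt Δx d1 d2 d3 lam β γ μ r δ : ℝ)
    (hα0 : 0 < α) (hα1 : α < 1) (hΔt : 0 < Δt) (hΔx : 0 < Δx)
    (hd1 : 0 < d1) (hd2 : 0 < d2) (hd3 : 0 < d3)
    (hlam : 0 < lam) (hβ : 0 < β) (hγ : 0 < γ) (hμ : 0 < μ) (hr : 0 < r) (hδ : 0 < δ)
    (S I R : ℕ → ℤ → ℝ)
    (hS : ∀ (k : ℕ) (n : ℤ), 0 ≤ n → n ≤ (M : ℤ) →
      S (k + 1) n - d1 * Real.Gamma (2 - α) * Δt ^ α / Δx ^ 2 *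
          (S (k + 1) (n - 1) - 2 * S (k + 1) n + S (k + 1) (n + 1)) =
        bcoef (1 - α) k * S 0 n +
          (∑ j ∈ Finset.Icc 1 k, (bcoef (1 - α) (j - 1) - bcoef (1 - α) j) * S (k + 1 - j) n) +
          Real.Gamma (2 - α) * Δt ^ α *
            (lam - β * S (k + 1) n * f (I k n) - γ * S (k + 1) n))
    (hI : ∀ (k : ℕ) (n : ℤ), 0 ≤ n → n ≤ (M : ℤ) →
      I (k + 1) n - d2 * Real.Gamma (2 - α) * Δt ^ α / Δx ^ 2 *
          (I (k + 1) (n - 1) - 2 * I (k + 1) n + I (k + 1) (n + 1)) =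
        bcoef (1 - α) k * I 0 n +
          (∑ j ∈ Finset.Icc 1 k, (bcoef (1 - α) (j - 1) - bcoef (1 - α) j) * I (k + 1 - j) n) +
          Real.Gamma (2 - α) * Δt ^ α *
            (β * S (k + 1) n * f (I k n) - (μ + r) * I (k + 1) n))
    (hR : ∀ (k : ℕ) (n : ℤ), 0 ≤ n → n ≤ (M : ℤ) →
      R (k + 1) n - d3 * Real.Gamma (2 - α) * Δt ^ α / Δx ^ 2 *
          (R (k + 1) (n - 1) - 2 * R (k + 1) n + R (k + 1) (n + 1)) =
        bcoef (1 - α) k * R 0 n +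
          (∑ j ∈ Finset.Icc 1 k, (bcoef (1 - α) (j - 1) - bcoef (1 - α) j) * R (k + 1 - j) n) +
          Real.Gamma (2 - α) * Δt ^ α *
            (r * I (k + 1) n - δ * R (k + 1) n))
    (hSbc : ∀ k : ℕ, S k (-1) = S k 0 ∧ S k ((M : ℤ) + 1) = S k (M : ℤ))
    (hIbc : ∀ k : ℕ, I k (-1) = I k 0 ∧ I k ((M : ℤ) + 1) = I k (M : ℤ))
    (hRbc : ∀ k : ℕ, R k (-1) = R k 0 ∧ R k ((M : ℤ) + 1) = R k (M : ℤ))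
    (hSinit : ∀ n : ℤ, 0 ≤ n → n ≤ (M : ℤ) → 0 < S 0 n)
    (hIinit : ∀ n : ℤ, 0 ≤ n → n ≤ (M : ℤ) → 0 < I 0 n)
    (hRinit : ∀ n : ℤ, 0 ≤ n → n ≤ (M : ℤ) → 0 < R 0 n)
    :
    ∀ (k : ℕ) (n : ℤ), 0 ≤ n → n ≤ (M : ℤ) → 0 ≤ S k n ∧ 0 ≤ I k n ∧ 0 ≤ R k n := by
  have hG : 0 < Real.Gamma (2 - α) := Real.Gamma_pos_of_pos (by linarith)
  have hgp : 0 < Real.Gamma (2 - α) * Δt ^ α :=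
    mul_pos hG (Real.rpow_pos_of_pos hΔt α)
  have hΔx2 : 0 < Δx ^ 2 := by positivity
  have hβ' : 0 < 1 - α := by linarith
  intro k
  induction k using Nat.strong_induction_on with
  | _ k IH =>
    cases k with
    | zero =>
      exact fun n h1 h2 => ⟨(hSinit n h1 h2).le, (hIinit n h1 h2).le, (hRinit n h1 h2).le⟩
    | succ k =>
      have IH' : ∀ m, m ≤ k → ∀ n : ℤ, 0 ≤ n → n ≤ (M:ℤ) →
          0 ≤ S m n ∧ 0 ≤ I m n ∧ 0 ≤ R m n := fun m hm => IH m (by omega)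
      have hSum : ∀ (v : ℕ → ℤ → ℝ), (∀ m, m ≤ k → ∀ n : ℤ, 0 ≤ n → n ≤ (M:ℤ) → 0 ≤ v m n) →
          ∀ n : ℤ, 0 ≤ n → n ≤ (M:ℤ) →
          0 ≤ bcoef (1-α) k * v 0 n +
            ∑ j ∈ Finset.Icc 1 k, (bcoef (1-α) (j-1) - bcoef (1-α) j) * v (k+1-j) n := by
        intro v hv n h1 h2
        have ha : 0 ≤ bcoef (1-α) k * v 0 n :=
          mul_nonneg (bcoef_pos hβ' k).le (hv 0 (Nat.zero_le _) n h1 h2)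
        have hb : 0 ≤ ∑ j ∈ Finset.Icc 1 k,
            (bcoef (1-α) (j-1) - bcoef (1-α) j) * v (k+1-j) n := by
          refine Finset.sum_nonneg fun j hj => ?_
          rw [Finset.mem_Icc] at hj
          exact mul_nonneg (sub_nonneg.mpr (bcoef_anti_s11 hβ'.le (by linarith) hj.1))
            (hv (k+1-j) (by omega) n h1 h2)
        linarith
      have hIk : ∀ n : ℤ, 0 ≤ n → n ≤ (M:ℤ) → 0 ≤ f (I k n) := fun n h1 h2 =>
        hfnn _ ((IH' k le_rfl n h1 h2).2.1)
      have hSnn : ∀ n : ℤ, 0 ≤ n → n ≤ (M:ℤ) → 0 ≤ S (k+1) n := by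
        refine minprinciple M (S (k+1))
          (fun n => bcoef (1-α) k * S 0 n +
            ∑ j ∈ Finset.Icc 1 k, (bcoef (1-α) (j-1) - bcoef (1-α) j) * S (k+1-j) n)
          (fun _ => lam) (fun n => β * f (I k n) + γ)
          (d1 * Real.Gamma (2-α) * Δt ^ α / Δx ^ 2) (Real.Gamma (2-α) * Δt ^ α)
          (div_pos (mul_pos (mul_pos hd1 hG) (Real.rpow_pos_of_pos hΔt α)) hΔx2) hgp
          (hSbc (k+1)).1 (hSbc (k+1)).2
          (hSum S (fun m hm n h1 h2 => (IH' m hm n h1 h2).1))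
          (fun _ _ _ => hlam.le)
          (fun n h1 h2 => add_nonneg (mul_nonneg hβ.le (hIk n h1 h2)) hγ.le)
          (fun n h1 h2 => by rw [hS k n h1 h2]; ring)
      have hInn : ∀ n : ℤ, 0 ≤ n → n ≤ (M:ℤ) → 0 ≤ I (k+1) n := by
        refine minprinciple M (I (k+1))
          (fun n => bcoef (1-α) k * I 0 n +
            ∑ j ∈ Finset.Icc 1 k, (bcoef (1-α) (j-1) - bcoef (1-α) j) * I (k+1-j) n)
          (fun n => β * S (k+1) n * f (I k n)) (fun _ => μ + r)
          (d2 * Real.Gamma (2-α) * Δt ^ α / Δx ^ 2) (Real.Gamma (2-α) * Δt ^ α)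
          (div_pos (mul_pos (mul_pos hd2 hG) (Real.rpow_pos_of_pos hΔt α)) hΔx2) hgp
          (hIbc (k+1)).1 (hIbc (k+1)).2
          (hSum I (fun m hm n h1 h2 => (IH' m hm n h1 h2).2.1))
          (fun n h1 h2 =>
            mul_nonneg (mul_nonneg hβ.le (hSnn n h1 h2)) (hIk n h1 h2))
          (fun _ _ _ => add_nonneg hμ.le hr.le)
          (fun n h1 h2 => by rw [hI k n h1 h2])
      have hRnn : ∀ n : ℤ, 0 ≤ n → n ≤ (M:ℤ) → 0 ≤ R (k+1) n := by
        refine minprinciple M (R (k+1))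
          (fun n => bcoef (1-α) k * R 0 n +
            ∑ j ∈ Finset.Icc 1 k, (bcoef (1-α) (j-1) - bcoef (1-α) j) * R (k+1-j) n)
          (fun n => r * I (k+1) n) (fun _ => δ)
          (d3 * Real.Gamma (2-α) * Δt ^ α / Δx ^ 2) (Real.Gamma (2-α) * Δt ^ α)
          (div_pos (mul_pos (mul_pos hd3 hG) (Real.rpow_pos_of_pos hΔt α)) hΔx2) hgp
          (hRbc (k+1)).1 (hRbc (k+1)).2
          (hSum R (fun m hm n h1 h2 => (IH' m hm n h1 h2).2.2))
          (fun n h1 h2 => mul_nonneg hr.le (hInn n h1 h2))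
          (fun _ _ _ => hδ.le)
          (fun n h1 h2 => by rw [hR k n h1 h2])
      exact fun n h1 h2 => ⟨hSnn n h1 h2, hInn n h1 h2, hRnn n h1 h2⟩
end
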